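/- Let Q be as in the context. Then for every real number a there exists a unique real number b > a such that ψ(a,b) = 0. -/

import Mathlib

open MeasureTheory intervalIntegral

/-- `φ(a,b) = ∫₀¹ Q'((1−t)b + t·a)/√(t(1−t)) dt`. -/
noncomputable def phi (Q : Polynomial ℝ) (a b : ℝ) : ℝ :=
  ∫ t in (0:ℝ)..1, Q.derivative.eval ((1 - t) * b + t * a) / Real.sqrt (t * (1 - t))

/-- `ψ(a,b) = (b−a)·∫₀¹ Q'((1−t)b + t·a)·√((1−t)/t) dt − 2π`. -/
noncomputable def psi (Q : Polynomial ℝ) (a b : ℝ) : ℝ :=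
  (b - a) * (∫ t in (0:ℝ)..1, Q.derivative.eval ((1 - t) * b + t * a) * Real.sqrt ((1 - t) / t))
    - 2 * Real.pi

/-!
Fix `a` and write `ψ(a, b) = (b - a) G(b) - 2π`, where `G(b)` integrates `Q'` along the chord
from `b` to `a` against the integrable weight `√((1 - t)/t)`. Convexity makes `Q'`, hence `G`,
nondecreasing, so `b ↦ (b - a) G(b)` is strictly increasing wherever it is positive: this gives
uniqueness. For existence, `ψ(a, a) = -2π`, `G` is continuous by dominated convergence, and
`G(b) > 0` for large `b` because `Q'` tends to `+∞`; the intermediate value theorem concludes.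
-/

open Filter Set

theorem continuous_intervalIntegral_mul {F : ℝ → ℝ → ℝ} (hF : Continuous (Function.uncurry F))
    {w : ℝ → ℝ} {p q : ℝ} (hw : IntervalIntegrable w volume p q) :
    Continuous fun x => ∫ t in p..q, F x t * w t := by
  refine continuous_iff_continuousAt.2 fun x₀ => ?_
  obtain ⟨C, hC⟩ := ((isCompact_Icc (a := x₀ - 1) (b := x₀ + 1)).prod isCompact_uIcc)
    |>.exists_bound_of_continuousOn (f := Function.uncurry F) hF.continuousOn
  have hFx : ∀ x, Continuous (F x) := fun x => hF.comp (Continuous.prodMk_right x)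
  refine continuousAt_of_dominated_interval (bound := fun t => C * ‖w t‖) ?_ ?_
    (hw.norm.const_mul C) ?_
  · exact .of_forall fun x => (hFx x).aestronglyMeasurable.mul hw.def'.aestronglyMeasurable
  · filter_upwards [Icc_mem_nhds (by linarith : x₀ - 1 < x₀) (by linarith : x₀ < x₀ + 1)]
      with x hx
    refine .of_forall fun t ht => ?_
    rw [norm_mul]
    exact mul_le_mul_of_nonneg_right (hC (x, t) ⟨hx, uIoc_subset_uIcc ht⟩) (norm_nonneg _)
  · exact .of_forall fun t _ =>
      ((hF.comp (Continuous.prodMk_left t)).mul continuous_const).continuousAt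

theorem intervalIntegrable_sqrt_one_sub_div :
    IntervalIntegrable (fun t : ℝ => √((1 - t) / t)) volume 0 1 := by
  refine (intervalIntegrable_rpow' (by norm_num : (-1:ℝ) < -(1/2))).mono_fun'
    (by fun_prop : Measurable fun t : ℝ => √((1 - t) / t)).aestronglyMeasurable ?_
  rw [uIoc_of_le zero_le_one]
  filter_upwards [ae_restrict_mem measurableSet_Ioc] with t ⟨ht0, ht1⟩
  rw [Real.norm_of_nonneg (Real.sqrt_nonneg _), Real.rpow_neg ht0.le, ← Real.sqrt_eq_rpow,
    ← Real.sqrt_inv]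
  exact Real.sqrt_le_sqrt (by rw [inv_eq_one_div]; gcongr; linarith)

/-- Unfolding `psi`, `psi Q a b = (b - a) * chordIntegral Q'.eval a b - 2 * π`. -/
noncomputable def chordIntegral (f : ℝ → ℝ) (a b : ℝ) : ℝ :=
  ∫ t in (0:ℝ)..1, f ((1 - t) * b + t * a) * √((1 - t) / t)

namespace chordIntegral

variable {f : ℝ → ℝ} (a : ℝ)

theorem intervalIntegrable_integrand (hf : Continuous f) (b : ℝ) {p q : ℝ}
    (hp : p ∈ uIcc 0 1) (hq : q ∈ uIcc 0 1) :
    IntervalIntegrable (fun t => f ((1 - t) * b + t * a) * √((1 - t) / t)) volume p q :=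
  (intervalIntegrable_sqrt_one_sub_div.mono_set (uIcc_subset_uIcc hp hq)).continuousOn_mul
    (by fun_prop)

theorem continuous (hf : Continuous f) : Continuous (chordIntegral f a) :=
  continuous_intervalIntegral_mul (F := fun b t => f ((1 - t) * b + t * a)) (by fun_prop)
    intervalIntegrable_sqrt_one_sub_div

theorem le_integral_of_le (hf : Continuous f) {b p q y : ℝ} (hp : 0 ≤ p) (hpq : p ≤ q)
    (hq : q ≤ 1) (hy : ∀ t ∈ Icc p q, y ≤ f ((1 - t) * b + t * a)) :
    y * ∫ t in p..q, √((1 - t) / t) ≤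
      ∫ t in p..q, f ((1 - t) * b + t * a) * √((1 - t) / t) := by
  have hp' : p ∈ uIcc 0 1 := mem_uIcc_of_le hp (hpq.trans hq)
  have hq' : q ∈ uIcc 0 1 := mem_uIcc_of_le (hp.trans hpq) hq
  rw [← intervalIntegral.integral_const_mul]
  exact integral_mono_on hpq
    ((intervalIntegrable_sqrt_one_sub_div.mono_set (uIcc_subset_uIcc hp' hq')).const_mul y)
    (intervalIntegrable_integrand a hf b hp' hq') fun t ht =>
      mul_le_mul_of_nonneg_right (hy t ht) (Real.sqrt_nonneg _)

theorem monotone (hf : Continuous f) (hmono : Monotone f) : Monotone (chordIntegral f a) := by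
  intro b₁ b₂ hb
  refine integral_mono_on zero_le_one
    (intervalIntegrable_integrand a hf b₁ left_mem_uIcc right_mem_uIcc)
    (intervalIntegrable_integrand a hf b₂ left_mem_uIcc right_mem_uIcc) fun t ht => ?_
  exact mul_le_mul_of_nonneg_right (hmono (by nlinarith [ht.2])) (Real.sqrt_nonneg _)

theorem exists_pos (hf : Continuous f) (hmono : Monotone f) (htop : Tendsto f atTop atTop) :
    ∃ b, a < b ∧ 0 < chordIntegral f a b := by
  have hhalf : (1/2 : ℝ) ∈ uIcc 0 1 := mem_uIcc_of_le (by norm_num) (by norm_num)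
  set W₁ := ∫ t in (0:ℝ)..(1/2), √((1 - t) / t)
  set W₂ := ∫ t in (1/2:ℝ)..1, √((1 - t) / t)
  have hW₁ : 0 < W₁ := intervalIntegral_pos_of_pos_on
    (intervalIntegrable_sqrt_one_sub_div.mono_set (uIcc_subset_uIcc left_mem_uIcc hhalf))
    (fun t ht => Real.sqrt_pos.2 (div_pos (by linarith [ht.2]) ht.1)) (by norm_num)
  obtain ⟨c, hc, hac⟩ := ((tendsto_atTop_add_const_right _ (f a * W₂)
    (htop.atTop_mul_const hW₁)).eventually_gt_atTop 0).and (eventually_gt_atTop a) |>.exists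
  refine ⟨2 * c - a, by linarith, ?_⟩
  -- the first half of the chord from `2c - a` to `a` lies above `c`, the second above `a`
  have h₁ := le_integral_of_le a hf (b := 2 * c - a) (q := 1/2) (y := f c) le_rfl
    (by norm_num) (by norm_num) fun t ht => hmono (by nlinarith [ht.2])
  have h₂ := le_integral_of_le a hf (b := 2 * c - a) (p := 1/2) (y := f a) (by norm_num)
    (by norm_num) le_rfl fun t ht => hmono (by nlinarith [ht.2])
  have hsplit := integral_add_adjacent_intervals
    (intervalIntegrable_integrand a hf (2 * c - a) left_mem_uIcc hhalf)
    (intervalIntegrable_integrand a hf (2 * c - a) hhalf right_mem_uIcc)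
  unfold chordIntegral
  linarith

end chordIntegral

theorem Monotone.lt_sub_mul_of_pos {G : ℝ → ℝ} (hG : Monotone G) {a u v : ℝ} (hau : a < u)
    (huv : u < v) (hpos : 0 < (u - a) * G u) : (u - a) * G u < (v - a) * G v := by
  have hGu : 0 < G u := pos_of_mul_pos_right hpos (by linarith)
  calc (u - a) * G u < (v - a) * G u := by gcongr
    _ ≤ (v - a) * G v := mul_le_mul_of_nonneg_left (hG huv.le) (by linarith)

theorem Monotone.existsUnique_sub_mul_sub_eq_zero {G : ℝ → ℝ} (hG : Monotone G)
    (hGc : Continuous G) {a c : ℝ} (hpos : ∃ b, a < b ∧ 0 < G b) (hc : 0 < c) :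
    ∃! b, a < b ∧ (b - a) * G b - c = 0 := by
  obtain ⟨b₀, hab₀, hGb₀⟩ := hpos
  set b₁ := b₀ + c / G b₀
  have hb₀b₁ : b₀ < b₁ := lt_add_of_pos_right b₀ (div_pos hc hGb₀)
  have hb₁ : c < (b₁ - a) * G b₁ := by
    calc c < (b₁ - a) * G b₀ := by
          rw [show b₁ - a = (b₀ - a) + c / G b₀ by ring, add_mul, div_mul_cancel₀ _ hGb₀.ne']
          nlinarith
      _ ≤ (b₁ - a) * G b₁ := mul_le_mul_of_nonneg_left (hG hb₀b₁.le) (by linarith)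
  have h0 : (0:ℝ) ∈ Icc ((a - a) * G a - c) ((b₁ - a) * G b₁ - c) :=
    ⟨by simp [hc.le], by linarith⟩
  obtain ⟨b, hb, hb0⟩ := intermediate_value_Icc (f := fun b => (b - a) * G b - c)
    (by linarith) (by fun_prop) h0
  have hab : a < b := hb.1.lt_of_ne (by rintro rfl; simp at hb0; linarith)
  refine ⟨b, ⟨hab, hb0⟩, fun y ⟨hay, hy⟩ => ?_⟩
  rcases lt_trichotomy y b with h | h | h
  · linarith [hG.lt_sub_mul_of_pos hay h (by linarith)]
  · exact h
  · linarith [hG.lt_sub_mul_of_pos hab h (by linarith)]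

theorem Polynomial.tendsto_eval_derivative_atTop {Q : Polynomial ℝ} (hdeg : 2 ≤ Q.natDegree)
    (hlead : 0 < Q.leadingCoeff) : Tendsto (fun x => Q.derivative.eval x) atTop atTop :=
  Q.derivative.tendsto_atTop_of_leadingCoeff_nonneg
    (natDegree_pos_iff_degree_pos.mp (by rw [natDegree_derivative]; omega))
    (by rw [leadingCoeff_derivative]; positivity)

theorem exists_unique_root_psi (Q : Polynomial ℝ) (m : ℕ) (hm : 1 ≤ m)
    (hdeg : Q.natDegree = 2 * m) (hlead : 0 < Q.leadingCoeff)
    (hconv : ∀ x : ℝ, 0 ≤ Q.derivative.derivative.eval x) :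
    ∀ a : ℝ, ∃! b : ℝ, a < b ∧ psi Q a b = 0 := by
  intro a
  have hcont : Continuous fun x => Q.derivative.eval x := Q.derivative.continuous
  have hmono : Monotone fun x => Q.derivative.eval x :=
    monotone_of_deriv_nonneg Q.derivative.differentiable fun x => by
      rw [Polynomial.deriv]; exact hconv x
  have htop := Polynomial.tendsto_eval_derivative_atTop (by omega) hlead
  exact (chordIntegral.monotone a hcont hmono).existsUnique_sub_mul_sub_eq_zero
    (chordIntegral.continuous a hcont) (chordIntegral.exists_pos a hcont hmono htop)
    Real.two_pi_pos
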